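/- arXiv:0905.4657 — 5 statements merged into one kernel-verified Lean document; each statement's English description precedes it below -/
import Mathlib

section
/- The complementary Young function of û equals ŷ(y) = 0 for |y| ≤ β and ŷ(y) = Φ(|y|) - Φ(β) for |y| > β, where β = D⁻u(0) is the left derivative of u at 0 and Φ(β) = u(0). -/
open Set Filter Topology

private instance : (𝓝[Iio (0:ℝ) \ {0}] (0:ℝ)).NeBot := by
  rw [diff_singleton_eq_self (by simp)]
  infer_instance

private lemma slope_anti (u : ℝ → ℝ) (hu_conc : ConcaveOn ℝ univ u) :
    ∀ x y : ℝ, x ≤ y → x ≠ 0 → y ≠ 0 → (u y - u 0) / y ≤ (u x - u 0) / x := by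
  intro x y hxy hx hy
  have h := hu_conc.neg.secant_mono (a := 0) (mem_univ 0) (mem_univ x) (mem_univ y) hx hy hxy
  simp only [Pi.neg_apply] at h
  have e1 : (-u x - -u 0) / (x - 0) = -((u x - u 0) / x) := by ring
  have e2 : (-u y - -u 0) / (y - 0) = -((u y - u 0) / y) := by ring
  rw [e1, e2] at h
  linarith

private lemma key_ineq (u : ℝ → ℝ) (hu_conc : ConcaveOn ℝ univ u) (β : ℝ)
    (hβ : HasDerivWithinAt u β (Iio (0:ℝ)) 0) : ∀ a : ℝ, u a ≤ u 0 + β * a := by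
  have htend : Tendsto (slope u 0) (𝓝[Iio (0:ℝ) \ {0}] 0) (𝓝 β) :=
    hasDerivWithinAt_iff_tendsto_slope.mp hβ
  have hmem : ∀ t : ℝ, t ∈ Iio (0:ℝ) \ {0} → slope u 0 t = (u t - u 0) / t := by
    intro t ht
    simp [slope_def_field, div_eq_div_iff]
  intro a
  rcases lt_trichotomy a 0 with ha | ha | ha
  · -- a < 0 : β ≤ (u a - u 0)/a
    have hle : β ≤ (u a - u 0) / a := by
      refine le_of_tendsto htend ?_
      have hIoi : Ioi a ∈ 𝓝[Iio (0:ℝ) \ {0}] (0:ℝ) :=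
        nhdsWithin_le_nhds (Ioi_mem_nhds ha)
      have hself : (Iio (0:ℝ) \ {0}) ∈ 𝓝[Iio (0:ℝ) \ {0}] (0:ℝ) := self_mem_nhdsWithin
      filter_upwards [hIoi, hself] with t hta ht
      rw [hmem t ht]
      exact slope_anti u hu_conc a t hta.le (ne_of_lt ha) (ne_of_lt ht.1)
    have := mul_le_mul_of_nonpos_right hle ha.le
    rw [div_mul_cancel₀ _ (ne_of_lt ha)] at this
    linarith
  · simp [ha]
  · -- a > 0 : (u a - u 0)/a ≤ β
    have hle : (u a - u 0) / a ≤ β := by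
      refine ge_of_tendsto htend ?_
      filter_upwards [self_mem_nhdsWithin] with t ht
      rw [hmem t ht]
      exact slope_anti u hu_conc t a (le_of_lt (ht.1.trans ha)) (ne_of_lt ht.1) (ne_of_gt ha)
    have := mul_le_mul_of_nonneg_right hle ha.le
    rw [div_mul_cancel₀ _ (ne_of_gt ha)] at this
    linarith

/-- The complementary Young function `ŷ(y) = sup_x (x|y| - û(x))` of
`û(x) = -u(-|x|) + u(0)` equals `0` for `|y| ≤ β` and `Φ(|y|) - Φ(β)` for `|y| > β`,
where `β = D⁻u(0)` is the left derivative of `u` at `0`, and moreover `Φ(β) = u(0)`.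
Here `Φ(y) = sup_x (u(x) - xy)` is the convex conjugate of `u`. -/
theorem complementary_young_function (u : ℝ → ℝ) (hu_mono : Monotone u)
    (hu_conc : ConcaveOn ℝ univ u) (hu_bot : Tendsto u atBot atBot)
    (hu_nonconst : ¬ ∀ x y : ℝ, u x = u y)
    (Φ : ℝ → ℝ)
    (hΦ : ∀ y : ℝ, 0 ≤ y → IsLUB {z : ℝ | ∃ x : ℝ, z = u x - x * y} (Φ y))
    (Ψ : ℝ → ℝ)
    (hΨ : ∀ y : ℝ, IsLUB {z : ℝ | ∃ x : ℝ, z = x * |y| - (-u (-|x|) + u 0)} (Ψ y))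
    (β : ℝ) (hβ : HasDerivWithinAt u β (Iio (0:ℝ)) 0) :
    (∀ y : ℝ, |y| ≤ β → Ψ y = 0) ∧
    (∀ y : ℝ, β < |y| → Ψ y = Φ |y| - Φ β) ∧
    Φ β = u 0 := by
  have key := key_ineq u hu_conc β hβ
  -- β ≥ 0
  have hβ0 : 0 ≤ β := by
    have htend : Tendsto (slope u 0) (𝓝[Iio (0:ℝ) \ {0}] 0) (𝓝 β) :=
      hasDerivWithinAt_iff_tendsto_slope.mp hβ
    refine ge_of_tendsto htend ?_
    filter_upwards [self_mem_nhdsWithin] with t ht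
    have ht0 : t < 0 := ht.1
    have hut : u t ≤ u 0 := hu_mono ht0.le
    rw [slope_def_field]
    rw [div_nonneg_iff]
    right
    constructor
    · simp only [sub_nonpos]; linarith
    · linarith
  -- Φ β = u 0
  have hΦβ : Φ β = u 0 := by
    refine ((hΦ β hβ0).unique (IsGreatest.isLUB ?_))
    constructor
    · exact ⟨0, by ring⟩
    · rintro z ⟨x, rfl⟩
      have := key x
      nlinarith
  refine ⟨?_, ?_, hΦβ⟩
  · -- |y| ≤ β case
    intro y hy
    refine (hΨ y).unique (IsGreatest.isLUB ?_)
    constructor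
    · exact ⟨0, by simp⟩
    · rintro z ⟨x, rfl⟩
      have h1 := key (-|x|)
      have h2 : x * |y| ≤ |x| * |y| := mul_le_mul_of_nonneg_right (le_abs_self x) (abs_nonneg y)
      have h3 : |x| * |y| ≤ |x| * β := mul_le_mul_of_nonneg_left hy (abs_nonneg x)
      nlinarith
  · -- β < |y| case
    intro y hy
    have hs0 : (0:ℝ) ≤ |y| := abs_nonneg y
    have hΦs := hΦ |y| hs0
    rw [hΦβ]
    refine (hΨ y).unique ?_
    constructor
    · rintro z ⟨x, rfl⟩
      have hmemΦ : u (-|x|) - (-|x|) * |y| ≤ Φ |y| := hΦs.1 ⟨-|x|, rfl⟩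
      have h2 : x * |y| ≤ |x| * |y| := mul_le_mul_of_nonneg_right (le_abs_self x) (abs_nonneg y)
      nlinarith
    · intro c hc
      have h0c : (0:ℝ) ≤ c := by
        have : (0:ℝ) ∈ {z : ℝ | ∃ x : ℝ, z = x * |y| - (-u (-|x|) + u 0)} := ⟨0, by simp⟩
        exact hc this
      have hub : Φ |y| ≤ c + u 0 := by
        refine hΦs.2 ?_
        rintro z ⟨t, rfl⟩
        rcases le_or_gt t 0 with ht | ht
        · have hmem : (-t) * |y| - (-u (-|(-t)|) + u 0) ∈
              {z : ℝ | ∃ x : ℝ, z = x * |y| - (-u (-|x|) + u 0)} := ⟨-t, rfl⟩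
          have := hc hmem
          rw [abs_neg, abs_of_nonpos ht] at this
          simp only [neg_neg] at this
          linarith
        · have h1 := key t
          nlinarith
      linarith
end

section
/- There exists an increasing concave utility u:ℝ→ℝ with lim_{x→-∞}u(x)=-∞ and a nonnegative random variable B such that E[u(-B)] > -∞ but E[u(-B - c)] = -∞ for every constant c > 0. -/
open Set Filter MeasureTheory

/-!
Take `u x = -exp (x²)` for `x ≤ 0` (capped at `-1` for `x ≥ 0`) and `B = |X|`, where `X` has
density proportional to `exp (-x²) / (1 + x²)`. Then `u (-B)` times the density is
`-1 / (1 + x²)`, which is integrable, whereas shifting by `c > 0` multiplies this integrand by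
`exp (2c|x| + c²)`, which outgrows `1 + x²`.
-/

theorem exists_isProbabilityMeasure_integrable_iff_integrable_mul {α : Type*}
    [MeasurableSpace α] {μ : Measure α} {f : α → ℝ} (hf_meas : Measurable f) (hf_nonneg : 0 ≤ f)
    (hf_int : Integrable f μ) (hf_pos : 0 < ∫ x, f x ∂μ) :
    ∃ P : Measure α, IsProbabilityMeasure P ∧
      ∀ g : α → ℝ, Integrable g P ↔ Integrable (fun x => f x * g x) μ := by
  set ν := μ.withDensity fun x => ENNReal.ofReal (f x)
  have hν : ν univ = ENNReal.ofReal (∫ x, f x ∂μ) := by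
    rw [withDensity_apply _ MeasurableSet.univ, Measure.restrict_univ,
      ofReal_integral_eq_lintegral_ofReal hf_int (ae_of_all _ hf_nonneg)]
  have hν_ne_zero : ν univ ≠ 0 := by simpa [hν] using hf_pos
  have hν_ne_top : ν univ ≠ ⊤ := by simp [hν]
  refine ⟨(ν univ)⁻¹ • ν, ⟨?_⟩, fun g => ?_⟩
  · simp [ENNReal.inv_mul_cancel hν_ne_zero hν_ne_top]
  · rw [integrable_smul_measure (ENNReal.inv_ne_zero.2 hν_ne_top)
        (ENNReal.inv_ne_top.2 hν_ne_zero),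
      integrable_withDensity_iff hf_meas.ennreal_ofReal (ae_of_all _ fun _ => ENNReal.ofReal_lt_top)]
    simp only [ENNReal.toReal_ofReal (hf_nonneg _), mul_comm]

theorem not_integrable_of_le_norm {α E : Type*} [MeasurableSpace α] [NormedAddCommGroup E]
    {μ : Measure α} {f : α → E} {s : Set α} {ε : ℝ} (hs : MeasurableSet s) (hμs : μ s = ⊤)
    (hε : 0 < ε) (hf : ∀ x ∈ s, ε ≤ ‖f x‖) : ¬ Integrable f μ := by
  intro h
  have hconst : IntegrableOn (fun _ => ε) s μ :=
    h.integrableOn.norm.mono' aestronglyMeasurable_const <|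
      (ae_restrict_mem hs).mono fun x hx => by simpa [abs_of_pos hε] using hf x hx
  rw [integrableOn_const_iff] at hconst
  simp [hε.ne', hμs] at hconst

theorem ConvexOn.comp_of_monotone {𝕜 E α β : Type*} [Semiring 𝕜] [PartialOrder 𝕜]
    [AddCommMonoid E] [AddCommMonoid α] [PartialOrder α] [AddCommMonoid β] [PartialOrder β]
    [SMul 𝕜 E] [SMul 𝕜 α] [SMul 𝕜 β] {s : Set E} {f : E → β} {g : β → α}
    (hg : ConvexOn 𝕜 univ g) (hg_mono : Monotone g) (hf : ConvexOn 𝕜 s f) :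
    ConvexOn 𝕜 s (g ∘ f) :=
  ⟨hf.1, fun _ hx _ hy _ _ ha hb hab =>
    (hg_mono (hf.2 hx hy ha hb hab)).trans (hg.2 trivial trivial ha hb hab)⟩

noncomputable def expSqUtility (x : ℝ) : ℝ := -Real.exp (min x 0 ^ 2)

theorem expSqUtility_of_nonpos {x : ℝ} (hx : x ≤ 0) : expSqUtility x = -Real.exp (x ^ 2) := by
  rw [expSqUtility, min_eq_left hx]

theorem monotone_expSqUtility : Monotone expSqUtility := fun x y hxy => by
  have : min y 0 ^ 2 ≤ min x 0 ^ 2 := by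
    nlinarith [min_le_min_right 0 hxy, min_le_right y 0]
  simpa [expSqUtility] using Real.exp_le_exp.2 this

theorem concaveOn_expSqUtility : ConcaveOn ℝ univ expSqUtility := by
  have hmin : ConcaveOn ℝ univ fun x : ℝ => min x 0 :=
    (concaveOn_id convex_univ).inf (concaveOn_const 0 convex_univ)
  have hsq : ConvexOn ℝ univ fun x : ℝ => min x 0 ^ 2 := by
    refine ⟨convex_univ, fun x hx y hy a b ha hb hab => ?_⟩
    simpa using (hmin.neg.pow (fun x _ => by simp) 2).2 hx hy ha hb hab
  exact (convexOn_exp.comp_of_monotone Real.exp_monotone hsq).neg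

theorem tendsto_expSqUtility_atBot : Tendsto expSqUtility atBot atBot := by
  refine tendsto_atBot_mono' atBot ?_ tendsto_id
  filter_upwards [eventually_le_atBot 0] with x hx
  rw [expSqUtility_of_nonpos hx, id]
  nlinarith [Real.add_one_le_exp (x ^ 2), sq_nonneg (x + 1 / 2)]

noncomputable def gaussCauchyDensity (x : ℝ) : ℝ := Real.exp (-x ^ 2) / (1 + x ^ 2)

theorem gaussCauchyDensity_pos (x : ℝ) : 0 < gaussCauchyDensity x := by
  unfold gaussCauchyDensity
  positivity

theorem measurable_gaussCauchyDensity : Measurable gaussCauchyDensity := by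
  unfold gaussCauchyDensity
  fun_prop

theorem integrable_gaussCauchyDensity : Integrable gaussCauchyDensity := by
  refine integrable_inv_one_add_sq.mono' measurable_gaussCauchyDensity.aestronglyMeasurable
    (ae_of_all _ fun x => ?_)
  rw [Real.norm_of_nonneg (gaussCauchyDensity_pos x).le, gaussCauchyDensity, div_eq_mul_inv]
  exact mul_le_of_le_one_left (by positivity) (Real.exp_le_one_iff.2 (by nlinarith))

theorem integral_gaussCauchyDensity_pos : 0 < ∫ x, gaussCauchyDensity x := by
  rw [integral_pos_iff_support_of_nonneg (fun x => (gaussCauchyDensity_pos x).le)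
    integrable_gaussCauchyDensity, Function.support_eq_univ fun x => (gaussCauchyDensity_pos x).ne']
  simp

theorem gaussCauchyDensity_mul_expSqUtility {c : ℝ} (hc : 0 ≤ c) (x : ℝ) :
    gaussCauchyDensity x * expSqUtility (-|x| - c) =
      -(Real.exp (c * (2 * |x| + c)) / (1 + x ^ 2)) := by
  have hexp : Real.exp (-x ^ 2) * Real.exp ((-|x| - c) ^ 2) = Real.exp (c * (2 * |x| + c)) := by
    rw [← Real.exp_add]
    congr 1
    nlinarith [sq_abs x]
  rw [expSqUtility_of_nonpos (by linarith [abs_nonneg x]), gaussCauchyDensity, ← hexp]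
  ring

theorem integrable_gaussCauchyDensity_mul_expSqUtility :
    Integrable fun x => gaussCauchyDensity x * expSqUtility (-|x|) := by
  have h x : gaussCauchyDensity x * expSqUtility (-|x|) = -(1 + x ^ 2)⁻¹ := by
    simpa using gaussCauchyDensity_mul_expSqUtility le_rfl x
  simp only [h]
  exact integrable_inv_one_add_sq.neg

theorem not_integrable_gaussCauchyDensity_mul_expSqUtility_sub {c : ℝ} (hc : 0 < c) :
    ¬ Integrable fun x => gaussCauchyDensity x * expSqUtility (-|x| - c) := by
  refine not_integrable_of_le_norm measurableSet_Ici Real.volume_Ici (pow_pos hc 2)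
    fun x (hx : 1 ≤ x) => ?_
  rw [gaussCauchyDensity_mul_expSqUtility hc.le, norm_neg, Real.norm_of_nonneg (by positivity),
    le_div_iff₀ (by positivity), abs_of_nonneg (by linarith)]
  have hquad := Real.quadratic_le_exp_of_nonneg (by positivity : 0 ≤ 2 * c * x)
  have hmono : Real.exp (2 * c * x) ≤ Real.exp (c * (2 * x + c)) := Real.exp_le_exp.2 (by nlinarith)
  nlinarith [mul_nonneg (sq_nonneg c) (by nlinarith : 0 ≤ x ^ 2 - 1)]

/-- There exists an increasing concave utility `u : ℝ → ℝ` with `u(-∞) = -∞` and a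
nonnegative random variable `B` (on some probability space) such that
`E[u(-B)] > -∞` but `E[u(-B - c)] = -∞` for every constant `c > 0`.
Since `u(-B) ≤ u(0)` is bounded above, `E[u(-B-c)] > -∞` is expressed as integrability. -/
theorem exists_claim_with_nonintegrable_shift :
    ∃ (Ω : Type) (_ : MeasurableSpace Ω) (P : Measure Ω), IsProbabilityMeasure P ∧
      ∃ (u : ℝ → ℝ) (B : Ω → ℝ), Monotone u ∧ ConcaveOn ℝ univ u ∧
        Tendsto u atBot atBot ∧ Measurable B ∧ (∀ ω, 0 ≤ B ω) ∧
        Integrable (fun ω => u (-(B ω))) P ∧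
        ∀ c : ℝ, 0 < c → ¬ Integrable (fun ω => u (-(B ω) - c)) P := by
  obtain ⟨P, hP, hP_integrable⟩ := exists_isProbabilityMeasure_integrable_iff_integrable_mul
    measurable_gaussCauchyDensity (fun x => (gaussCauchyDensity_pos x).le)
    integrable_gaussCauchyDensity integral_gaussCauchyDensity_pos
  refine ⟨ℝ, inferInstance, P, hP, expSqUtility, fun x => |x|, monotone_expSqUtility,
    concaveOn_expSqUtility, tendsto_expSqUtility_atBot, continuous_abs.measurable, abs_nonneg,
    (hP_integrable _).2 integrable_gaussCauchyDensity_mul_expSqUtility, fun c hc => ?_⟩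
  rw [hP_integrable]
  exact not_integrable_gaussCauchyDensity_mul_expSqUtility_sub hc
end

section
/- If Q ∈ (L^û)*₊ has singular part Q^s (vanishing on M^û) whose norm satisfies ‖Q^s‖ = sup_{f ∈ Dom(I_u)} Q^s(-f), and g is a random variable with g⁻ ∈ L^û and E[u(g)] > -∞, then ‖Q^s‖ ≥ -Q̂^s(g), where Q̂^s is the extension of Q^s. -/
open Set Filter MeasureTheory
open scoped ENNReal

variable {Ω : Type*} [MeasurableSpace Ω]

/-- Membership in the Orlicz space `L^û`: `E[û(αf)] < ∞` for some `α > 0`. -/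
def MemLu (P : Measure Ω) (uh : ℝ → ℝ) (f : Ω → ℝ) : Prop :=
  ∃ α : ℝ, 0 < α ∧ ∫⁻ ω, ENNReal.ofReal (uh (α * f ω)) ∂P < ⊤

/-- Membership in the Morse subspace `M^û`: `E[û(kf)] < ∞` for all `k > 0`. -/
def MemMu (P : Measure Ω) (uh : ℝ → ℝ) (f : Ω → ℝ) : Prop :=
  ∀ k : ℝ, 0 < k → ∫⁻ ω, ENNReal.ofReal (uh (k * f ω)) ∂P < ⊤

/-- Membership in `Dom(I_u) = {f ∈ L^û : E[u(f)] > -∞}`. -/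
def MemDomIu (P : Measure Ω) (u uh : ℝ → ℝ) (f : Ω → ℝ) : Prop :=
  MemLu P uh f ∧ ∫⁻ ω, ENNReal.ofReal (-(u (f ω))) ∂P < ⊤

/-- The monotone extension `Q̂(g) = sup{Q(f) : f ∈ L^û, f ≤ g}`. -/
noncomputable def Qhat (P : Measure Ω) (uh : ℝ → ℝ) (Q : (Ω → ℝ) → ℝ) (g : Ω → ℝ) :
    EReal :=
  ⨆ f : {f : Ω → ℝ // MemLu P uh f ∧ ∀ ω, f ω ≤ g ω}, ((Q f.1 : ℝ) : EReal)

/-- If `Q^s` is a nonnegative singular functional (vanishing on `M^û`) whose norm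
satisfies `‖Q^s‖ = sup_{f ∈ Dom(I_u)} Q^s(-f)`, and `g` is a random variable with
`g⁻ ∈ L^û` and `E[u(g)] > -∞`, then `‖Q^s‖ ≥ -Q̂^s(g)`. -/
theorem singular_norm_ge_neg_Qhat (P : Measure Ω) [IsProbabilityMeasure P]
    (u : ℝ → ℝ) (hu_mono : Monotone u) (hu_conc : ConcaveOn ℝ univ u)
    (hu_bot : Tendsto u atBot atBot) (hu_nonconst : ¬ ∀ x y : ℝ, u x = u y)
    (uh : ℝ → ℝ) (hhat : ∀ x, uh x = -u (-|x|) + u 0)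
    (Qs : (Ω → ℝ) → ℝ)
    (hadd : ∀ f g, MemLu P uh f → MemLu P uh g → Qs (f + g) = Qs f + Qs g)
    (hsmul : ∀ (c : ℝ) f, MemLu P uh f → Qs (c • f) = c * Qs f)
    (hpos : ∀ f, MemLu P uh f → (∀ ω, 0 ≤ f ω) → 0 ≤ Qs f)
    (hsing : ∀ f, MemMu P uh f → Qs f = 0)
    (N : ℝ)
    (hnorm : IsLUB {x : ℝ | ∃ f, MemDomIu P u uh f ∧ x = Qs (-f)} N)
    (g : Ω → ℝ)
    (hg : MemLu P uh (fun ω => max (-(g ω)) 0))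
    (hEu : ∫⁻ ω, ENNReal.ofReal (-(u (g ω))) ∂P < ⊤) :
    -(Qhat P uh Qs g) ≤ ((N : ℝ) : EReal) := by

  classical
  set h : Ω → ℝ := fun ω => max (-(g ω)) 0 with hh_def
  have huh_even : ∀ x, uh (-x) = uh x := by
    intro x; rw [hhat, hhat, abs_neg]
  -- -h is in L^û
  have hhL : MemLu P uh h := hg
  have hnegL : MemLu P uh (-h) := by
    obtain ⟨α, hα, hint⟩ := hhL
    refine ⟨α, hα, ?_⟩
    have : ∀ ω, uh (α * (-h) ω) = uh (α * h ω) := by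
      intro ω
      have : α * (-h) ω = -(α * h ω) := by simp
      rw [this, huh_even]
    simpa only [this] using hint
  -- -h ∈ Dom(I_u)
  have hDom : MemDomIu P u uh (-h) := by
    refine ⟨hnegL, ?_⟩
    have hpt : ∀ ω, ENNReal.ofReal (-(u ((-h) ω))) ≤
        ENNReal.ofReal (-(u (g ω))) + ENNReal.ofReal (-(u 0)) := by
      intro ω
      by_cases hc : g ω ≤ 0
      · have : (-h) ω = g ω := by
          simp only [hh_def, Pi.neg_apply]
          have : max (-(g ω)) 0 = -(g ω) := max_eq_left (by linarith)
          rw [this]; ring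
        rw [this]; exact le_add_right le_rfl
      · have : (-h) ω = 0 := by
          simp only [hh_def, Pi.neg_apply]
          have : max (-(g ω)) 0 = 0 := max_eq_right (by linarith)
          rw [this]; ring
        rw [this]; exact le_add_left le_rfl
    calc ∫⁻ ω, ENNReal.ofReal (-(u ((-h) ω))) ∂P
        ≤ ∫⁻ ω, (ENNReal.ofReal (-(u (g ω))) + ENNReal.ofReal (-(u 0))) ∂P :=
          lintegral_mono hpt
      _ = (∫⁻ ω, ENNReal.ofReal (-(u (g ω))) ∂P) + ENNReal.ofReal (-(u 0)) * P Set.univ := by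
          rw [lintegral_add_right _ measurable_const, lintegral_const]
      _ < ⊤ := by
          apply ENNReal.add_lt_top.mpr
          exact ⟨hEu, ENNReal.mul_lt_top ENNReal.ofReal_lt_top (measure_lt_top P _)⟩
  -- Qs h ≤ N via the LUB property
  have hQN : Qs h ≤ N := by
    apply hnorm.1
    exact ⟨-h, hDom, by rw [neg_neg]⟩
  have hQneg : Qs (-h) = -Qs h := by
    have := hsmul (-1) h hhL
    rw [neg_one_smul] at this
    rw [this]; ring
  -- -h ≤ g pointwise
  have hle : ∀ ω, (-h) ω ≤ g ω := by
    intro ω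
    simp only [hh_def, Pi.neg_apply]
    rw [neg_le]
    exact le_max_left _ _
  -- Qhat ≥ Qs(-h)
  have hsup : ((Qs (-h) : ℝ) : EReal) ≤ Qhat P uh Qs g :=
    le_iSup (fun f : {f : Ω → ℝ // MemLu P uh f ∧ ∀ ω, f ω ≤ g ω} =>
      ((Qs f.1 : ℝ) : EReal)) ⟨-h, hnegL, hle⟩
  -- conclude
  have h0 : 0 ≤ Qs h := hpos h hhL (fun ω => le_max_right _ _)
  have : -(Qhat P uh Qs g) ≤ ((-(Qs (-h)) : ℝ) : EReal) := by
    rw [EReal.coe_neg]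
    exact EReal.neg_le_neg_iff.mpr hsup
  refine this.trans ?_
  rw [EReal.coe_le_coe_iff]
  rw [hQneg, neg_neg]
  exact hQN
end

section
/- Let B ∈ A_u and L = sup{β>0 : E[û(βB⁺)] < +∞} (so L ≥ 1). Then for any Q in the dual set with singular part Q^s, the extended value satisfies Q̂^s(-B) ≥ -(1/L)‖Q^s‖. -/
open Set Filter MeasureTheory
open scoped ENNReal

variable {Ω : Type*} [MeasurableSpace Ω]

/-- Let `B ∈ A_u` and `L = sup{β > 0 : E[û(βB⁺)] < +∞}`.  Then for any nonnegative
singular functional `Q^s` in the dual set, with norm `‖Q^s‖ = sup_{f∈Dom(I_u)}Q^s(-f)`,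
the extended value satisfies `Q̂^s(-B) ≥ -(1/L)‖Q^s‖`. -/
theorem singular_bound_on_claim (P : Measure Ω) [IsProbabilityMeasure P]
    (u : ℝ → ℝ) (hu_mono : Monotone u) (hu_conc : ConcaveOn ℝ univ u)
    (hu_bot : Tendsto u atBot atBot) (hu_nonconst : ¬ ∀ x y : ℝ, u x = u y)
    (uh : ℝ → ℝ) (hhat : ∀ x, uh x = -u (-|x|) + u 0)
    (B : Ω → ℝ) (hBm : Measurable B)
    -- `B ∈ A_u` : `E[u(f - B)] < +∞` for all `f ∈ L^û` ...
    (hB1 : ∀ f : Ω → ℝ, MemLu P uh f →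
      ∫⁻ ω, ENNReal.ofReal (u (f ω - B ω)) ∂P < ⊤)
    -- ... and `E[u(-(1+ε)B⁺)] > -∞` for some `ε > 0`
    (hB2 : ∃ ε : ℝ, 0 < ε ∧
      ∫⁻ ω, ENNReal.ofReal (-(u (-((1 + ε) * max (B ω) 0)))) ∂P < ⊤)
    (L : ℝ)
    (hL : IsLUB {β : ℝ | 0 < β ∧
      ∫⁻ ω, ENNReal.ofReal (uh (β * max (B ω) 0)) ∂P < ⊤} L)
    (Qs : (Ω → ℝ) → ℝ)
    (hadd : ∀ f g, MemLu P uh f → MemLu P uh g → Qs (f + g) = Qs f + Qs g)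
    (hsmul : ∀ (c : ℝ) f, MemLu P uh f → Qs (c • f) = c * Qs f)
    (hpos : ∀ f, MemLu P uh f → (∀ ω, 0 ≤ f ω) → 0 ≤ Qs f)
    (hsing : ∀ f, MemMu P uh f → Qs f = 0)
    (N : ℝ)
    (hnorm : IsLUB {x : ℝ | ∃ f, MemDomIu P u uh f ∧ x = Qs (-f)} N) :
    ((-(N / L) : ℝ) : EReal) ≤ Qhat P uh Qs (fun ω => -(B ω)) := by
  classical
  set Bp : Ω → ℝ := fun ω => max (B ω) 0 with hBpdef
  have hBp_nonneg : ∀ ω, (0:ℝ) ≤ Bp ω := fun ω => le_max_right _ _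
  have huh_even : ∀ x : ℝ, uh (-x) = uh x := by
    intro x; rw [hhat, hhat, abs_neg]
  have huh_nn : ∀ x : ℝ, 0 ≤ x → uh x = -u (-x) + u 0 := by
    intro x hx; rw [hhat, abs_of_nonneg hx]
  obtain ⟨ε, hε, hεfin⟩ := hB2
  have h1ε : (0:ℝ) < 1 + ε := by linarith
  -- (1+ε) belongs to the set defining L
  have hmem : (1+ε) ∈ {β : ℝ | 0 < β ∧
      ∫⁻ ω, ENNReal.ofReal (uh (β * Bp ω)) ∂P < ⊤} := by
    refine ⟨h1ε, ?_⟩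
    have hb : ∀ ω, ENNReal.ofReal (uh ((1+ε) * Bp ω)) ≤
        ENNReal.ofReal (-(u (-((1+ε) * Bp ω)))) + ENNReal.ofReal (u 0) := by
      intro ω
      rw [huh_nn _ (mul_nonneg h1ε.le (hBp_nonneg ω))]
      exact ENNReal.ofReal_add_le
    calc ∫⁻ ω, ENNReal.ofReal (uh ((1+ε) * Bp ω)) ∂P
        ≤ ∫⁻ ω, (ENNReal.ofReal (-(u (-((1+ε) * Bp ω)))) + ENNReal.ofReal (u 0)) ∂P :=
          lintegral_mono hb
      _ = (∫⁻ ω, ENNReal.ofReal (-(u (-((1+ε) * Bp ω)))) ∂P)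
            + ENNReal.ofReal (u 0) * P univ := by
          rw [lintegral_add_right _ measurable_const, lintegral_const]
      _ < ⊤ := by
          refine ENNReal.add_lt_top.2 ⟨hεfin, ?_⟩
          simp [measure_univ]
  have hBpLu : MemLu P uh Bp := ⟨1+ε, h1ε, hmem.2⟩
  have hnegLu : ∀ f : Ω → ℝ, MemLu P uh f → MemLu P uh (fun ω => -(f ω)) := by
    rintro f ⟨α, hα, hfin⟩
    refine ⟨α, hα, ?_⟩
    have : ∀ ω, uh (α * -(f ω)) = uh (α * f ω) := by
      intro ω; rw [mul_neg, huh_even]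
    simpa only [this] using hfin
  have hLpos : (0:ℝ) < L := lt_of_lt_of_le h1ε (hL.1 hmem)
  -- Key: for every b in the set, b * Qs Bp ≤ N
  have hkey : ∀ b : ℝ, b ∈ {β : ℝ | 0 < β ∧
      ∫⁻ ω, ENNReal.ofReal (uh (β * Bp ω)) ∂P < ⊤} → b * Qs Bp ≤ N := by
    rintro b ⟨hb, hfin⟩
    set f : Ω → ℝ := fun ω => -(b * Bp ω) with hfdef
    have hfLu : MemLu P uh f := by
      refine ⟨1, one_pos, ?_⟩
      have : ∀ ω, uh (1 * f ω) = uh (b * Bp ω) := by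
        intro ω; rw [one_mul, hfdef]; rw [huh_even]
      simpa only [this] using hfin
    have hfDom : MemDomIu P u uh f := by
      refine ⟨hfLu, ?_⟩
      have hb2 : ∀ ω, ENNReal.ofReal (-(u (f ω))) ≤
          ENNReal.ofReal (uh (b * Bp ω)) + ENNReal.ofReal (-(u 0)) := by
        intro ω
        have hx : (0:ℝ) ≤ b * Bp ω := mul_nonneg hb.le (hBp_nonneg ω)
        have : -(u (f ω)) = uh (b * Bp ω) + (-(u 0)) := by
          rw [huh_nn _ hx, hfdef]; ring
        rw [this]
        exact ENNReal.ofReal_add_le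
      calc ∫⁻ ω, ENNReal.ofReal (-(u (f ω))) ∂P
          ≤ ∫⁻ ω, (ENNReal.ofReal (uh (b * Bp ω)) + ENNReal.ofReal (-(u 0))) ∂P :=
            lintegral_mono hb2
        _ = (∫⁻ ω, ENNReal.ofReal (uh (b * Bp ω)) ∂P)
              + ENNReal.ofReal (-(u 0)) * P univ := by
            rw [lintegral_add_right _ measurable_const, lintegral_const]
        _ < ⊤ := by
            refine ENNReal.add_lt_top.2 ⟨hfin, ?_⟩
            simp [measure_univ]
    have hnegf : -f = b • Bp := by
      funext ω; simp [hfdef]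
    have : Qs (-f) = b * Qs Bp := by
      rw [hnegf, hsmul b Bp hBpLu]
    have hle : Qs (-f) ≤ N := hnorm.1 ⟨f, hfDom, rfl⟩
    linarith [this ▸ hle]
  have hQsBp : (0:ℝ) ≤ Qs Bp := hpos Bp hBpLu hBp_nonneg
  have hN : (0:ℝ) ≤ N := by
    have := hkey (1+ε) hmem
    nlinarith
  have hfinal : Qs Bp ≤ N / L := by
    rcases eq_or_lt_of_le hQsBp with h0 | hQpos
    · rw [← h0]; exact div_nonneg hN hLpos.le
    · have hub : L ≤ N / Qs Bp := hL.2 (fun b hb => (le_div_iff₀ hQpos).2 (hkey b hb))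
      have : L * Qs Bp ≤ N := (le_div_iff₀ hQpos).1 hub
      rw [le_div_iff₀ hLpos]
      nlinarith
  -- the candidate function -Bp
  have hle : ∀ ω, -(Bp ω) ≤ -(B ω) := fun ω => neg_le_neg (le_max_left _ _)
  have hQneg : Qs (fun ω => -(Bp ω)) = -(Qs Bp) := by
    have h1 : (fun ω => -(Bp ω)) = (-1 : ℝ) • Bp := by
      funext ω; simp
    rw [h1, hsmul (-1) Bp hBpLu]; ring
  have hsup : ((Qs (fun ω => -(Bp ω)) : ℝ) : EReal) ≤ Qhat P uh Qs (fun ω => -(B ω)) :=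
    le_iSup (fun f : {f : Ω → ℝ // MemLu P uh f ∧ ∀ ω, f ω ≤ -(B ω)} =>
      ((Qs f.1 : ℝ) : EReal)) ⟨fun ω => -(Bp ω), hnegLu Bp hBpLu, hle⟩
  refine le_trans ?_ hsup
  rw [EReal.coe_le_coe_iff, hQneg]
  linarith
end

section
/- If additionally B⁻ ∈ L^û and l = sup{α>0 : E[û(αB⁻)] < +∞} > 0, then -(1/L)‖Q^s‖ ≤ Q^s(-B) ≤ (1/l)‖Q^s‖; in particular Q^s(B) = 0 whenever B ∈ M^û. -/
open Set Filter MeasureTheory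
open scoped ENNReal

variable {Ω : Type*} [MeasurableSpace Ω]

/-- Let `B ∈ A_u` with also `B⁻ ∈ L^û`, `L = sup{β>0 : E[û(βB⁺)]<∞}` and
`l = sup{α>0 : E[û(αB⁻)]<∞} > 0`.  Then for a nonnegative singular functional `Q^s`
with `‖Q^s‖ = sup_{f∈Dom(I_u)}Q^s(-f)` one has
`-(1/L)‖Q^s‖ ≤ Q^s(-B) ≤ (1/l)‖Q^s‖`; in particular `Q^s(B) = 0` when `B ∈ M^û`. -/
theorem singular_two_sided_bound (P : Measure Ω) [IsProbabilityMeasure P]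
    (u : ℝ → ℝ) (hu_mono : Monotone u) (hu_conc : ConcaveOn ℝ univ u)
    (hu_bot : Tendsto u atBot atBot) (hu_nonconst : ¬ ∀ x y : ℝ, u x = u y)
    (uh : ℝ → ℝ) (hhat : ∀ x, uh x = -u (-|x|) + u 0)
    (B : Ω → ℝ) (hBm : Measurable B)
    -- `B ∈ A_u` :
    (hB1 : ∀ f : Ω → ℝ, MemLu P uh f →
      ∫⁻ ω, ENNReal.ofReal (u (f ω - B ω)) ∂P < ⊤)
    (hB2 : ∃ ε : ℝ, 0 < ε ∧
      ∫⁻ ω, ENNReal.ofReal (-(u (-((1 + ε) * max (B ω) 0)))) ∂P < ⊤)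
    -- `B⁻ ∈ L^û` :
    (hBneg : MemLu P uh (fun ω => max (-(B ω)) 0))
    (L : ℝ)
    (hL : IsLUB {β : ℝ | 0 < β ∧
      ∫⁻ ω, ENNReal.ofReal (uh (β * max (B ω) 0)) ∂P < ⊤} L)
    (l : ℝ) (hlpos : 0 < l)
    (hl : IsLUB {α : ℝ | 0 < α ∧
      ∫⁻ ω, ENNReal.ofReal (uh (α * max (-(B ω)) 0)) ∂P < ⊤} l)
    (Qs : (Ω → ℝ) → ℝ)
    (hadd : ∀ f g, MemLu P uh f → MemLu P uh g → Qs (f + g) = Qs f + Qs g)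
    (hsmul : ∀ (c : ℝ) f, MemLu P uh f → Qs (c • f) = c * Qs f)
    (hpos : ∀ f, MemLu P uh f → (∀ ω, 0 ≤ f ω) → 0 ≤ Qs f)
    (hsing : ∀ f, MemMu P uh f → Qs f = 0)
    (N : ℝ)
    (hnorm : IsLUB {x : ℝ | ∃ f, MemDomIu P u uh f ∧ x = Qs (-f)} N) :
    (-(N / L) ≤ Qs (fun ω => -(B ω)) ∧ Qs (fun ω => -(B ω)) ≤ N / l) ∧
    (MemMu P uh B → Qs B = 0) := by
  classical
  have heven : ∀ x : ℝ, uh (-x) = uh x := fun x => by rw [hhat, hhat, abs_neg]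
  have huh_val : ∀ x : ℝ, 0 ≤ x → uh x = -u (-x) + u 0 := fun x hx => by
    rw [hhat, abs_of_nonneg hx]
  obtain ⟨ε, hε, hεint⟩ := hB2
  -- generic finiteness transfer lemmas
  have hint_aux : ∀ (g : Ω → ℝ), (∀ ω, 0 ≤ g ω) →
      (∫⁻ ω, ENNReal.ofReal (-(u (-(g ω)))) ∂P < ⊤) →
      ∫⁻ ω, ENNReal.ofReal (uh (g ω)) ∂P < ⊤ := by
    intro g hg hfin
    have hle : ∀ ω, ENNReal.ofReal (uh (g ω)) ≤
        ENNReal.ofReal (-(u (-(g ω)))) + ENNReal.ofReal (u 0) := by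
      intro ω
      rw [huh_val _ (hg ω)]
      exact ENNReal.ofReal_add_le
    calc ∫⁻ ω, ENNReal.ofReal (uh (g ω)) ∂P
        ≤ ∫⁻ ω, (ENNReal.ofReal (-(u (-(g ω)))) + ENNReal.ofReal (u 0)) ∂P :=
          lintegral_mono hle
      _ = (∫⁻ ω, ENNReal.ofReal (-(u (-(g ω)))) ∂P)
            + ENNReal.ofReal (u 0) * P Set.univ := by
          rw [lintegral_add_right _ measurable_const, lintegral_const]
      _ < ⊤ := ENNReal.add_lt_top.mpr ⟨hfin, by finiteness⟩
  have hint_aux2 : ∀ (g : Ω → ℝ), (∀ ω, 0 ≤ g ω) →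
      (∫⁻ ω, ENNReal.ofReal (uh (g ω)) ∂P < ⊤) →
      ∫⁻ ω, ENNReal.ofReal (-(u (-(g ω)))) ∂P < ⊤ := by
    intro g hg hfin
    have hle : ∀ ω, ENNReal.ofReal (-(u (-(g ω)))) ≤
        ENNReal.ofReal (uh (g ω)) + ENNReal.ofReal (-(u 0)) := by
      intro ω
      have h1 : -(u (-(g ω))) = uh (g ω) + (-(u 0)) := by
        rw [huh_val _ (hg ω)]; ring
      rw [h1]
      exact ENNReal.ofReal_add_le
    calc ∫⁻ ω, ENNReal.ofReal (-(u (-(g ω)))) ∂P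
        ≤ ∫⁻ ω, (ENNReal.ofReal (uh (g ω)) + ENNReal.ofReal (-(u 0))) ∂P :=
          lintegral_mono hle
      _ = (∫⁻ ω, ENNReal.ofReal (uh (g ω)) ∂P)
            + ENNReal.ofReal (-(u 0)) * P Set.univ := by
          rw [lintegral_add_right _ measurable_const, lintegral_const]
      _ < ⊤ := ENNReal.add_lt_top.mpr ⟨hfin, by finiteness⟩
  have hBp_nonneg : ∀ ω, (0:ℝ) ≤ max (B ω) 0 := fun ω => le_max_right _ _
  have hBn_nonneg : ∀ ω, (0:ℝ) ≤ max (-(B ω)) 0 := fun ω => le_max_right _ _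
  -- 1+ε belongs to the set defining L
  have hTint : ∫⁻ ω, ENNReal.ofReal (uh ((1 + ε) * max (B ω) 0)) ∂P < ⊤ := by
    exact hint_aux (fun ω => (1 + ε) * max (B ω) 0)
      (fun ω => mul_nonneg (by linarith) (hBp_nonneg ω)) hεint
  have hLpos : 0 < L :=
    lt_of_lt_of_le (by linarith : (0:ℝ) < 1 + ε) (hL.1 ⟨by linarith, hTint⟩)
  have hBp_mem : MemLu P uh (fun ω => max (B ω) 0) := ⟨1 + ε, by linarith, hTint⟩
  -- zero function
  have hzero_mem : MemLu P uh (fun _ => (0:ℝ)) := by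
    refine ⟨1, one_pos, ?_⟩
    have h0 : uh 0 = 0 := by rw [hhat]; simp
    simp [h0]
  have hQs0 : Qs (fun _ => (0:ℝ)) = 0 := by
    have h := hsmul 0 (fun _ => (0:ℝ)) hzero_mem
    rw [zero_mul] at h
    rw [show (0:ℝ) • (fun _ : Ω => (0:ℝ)) = fun _ : Ω => (0:ℝ) from
      funext fun ω => by simp] at h
    exact h
  have hN0 : (0:ℝ) ≤ N := by
    apply hnorm.1
    refine ⟨fun _ => 0, ⟨hzero_mem, ?_⟩, ?_⟩
    · rw [lintegral_const]; finiteness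
    · rw [show (-(fun _ : Ω => (0:ℝ))) = fun _ : Ω => (0:ℝ) from
        funext fun ω => by simp, hQs0]
  -- key estimate: if γ > 0 and E[û(γ g)] < ∞ for nonnegative g ∈ L^û then γ Qs g ≤ N
  have key : ∀ (g : Ω → ℝ), (∀ ω, 0 ≤ g ω) → MemLu P uh g → ∀ γ : ℝ, 0 < γ →
      (∫⁻ ω, ENNReal.ofReal (uh (γ * g ω)) ∂P < ⊤) → γ * Qs g ≤ N := by
    intro g hg hgmem γ hγ hfin
    have hfmem : MemLu P uh (fun ω => -(γ * g ω)) := by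
      refine ⟨1, one_pos, ?_⟩
      simpa [heven] using hfin
    have hdom : MemDomIu P u uh (fun ω => -(γ * g ω)) := by
      refine ⟨hfmem, ?_⟩
      exact hint_aux2 (fun ω => γ * g ω)
        (fun ω => mul_nonneg hγ.le (hg ω)) hfin
    have hle : Qs (-(fun ω => -(γ * g ω))) ≤ N := hnorm.1 ⟨_, hdom, rfl⟩
    have hfun : (-(fun ω => -(γ * g ω))) = γ • g := by
      funext ω; simp
    rw [hfun, hsmul γ g hgmem] at hle
    exact hle
  have hQBn : 0 ≤ Qs (fun ω => max (-(B ω)) 0) := hpos _ hBneg hBn_nonneg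
  have hQBp : 0 ≤ Qs (fun ω => max (B ω) 0) := hpos _ hBp_mem hBp_nonneg
  have hlb : Qs (fun ω => max (-(B ω)) 0) * l ≤ N := by
    rcases eq_or_lt_of_le hQBn with h0 | hc
    · rw [← h0, zero_mul]; exact hN0
    · have hub : l ≤ N / Qs (fun ω => max (-(B ω)) 0) := by
        apply hl.2
        intro α hα
        rw [le_div_iff₀ hc]
        have := key (fun ω => max (-(B ω)) 0) hBn_nonneg hBneg α hα.1 hα.2
        linarith
      calc Qs (fun ω => max (-(B ω)) 0) * l
          ≤ Qs (fun ω => max (-(B ω)) 0) * (N / Qs (fun ω => max (-(B ω)) 0)) :=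
            mul_le_mul_of_nonneg_left hub hQBn
        _ = N := by field_simp
  have hLb : Qs (fun ω => max (B ω) 0) * L ≤ N := by
    rcases eq_or_lt_of_le hQBp with h0 | hc
    · rw [← h0, zero_mul]; exact hN0
    · have hub : L ≤ N / Qs (fun ω => max (B ω) 0) := by
        apply hL.2
        intro β hβ
        rw [le_div_iff₀ hc]
        have := key (fun ω => max (B ω) 0) hBp_nonneg hBp_mem β hβ.1 hβ.2
        linarith
      calc Qs (fun ω => max (B ω) 0) * L
          ≤ Qs (fun ω => max (B ω) 0) * (N / Qs (fun ω => max (B ω) 0)) :=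
            mul_le_mul_of_nonneg_left hub hQBp
        _ = N := by field_simp
  -- decomposition -B = B⁻ - B⁺
  have hnegBp_mem : MemLu P uh (fun ω => -(max (B ω) 0)) := by
    obtain ⟨α, hα, hfin⟩ := hBp_mem
    exact ⟨α, hα, by simpa [mul_neg, heven] using hfin⟩
  have hdecomp : (fun ω => -(B ω)) =
      (fun ω => max (-(B ω)) 0) + (fun ω => -(max (B ω) 0)) := by
    funext ω
    simp only [Pi.add_apply]
    rcases le_total (B ω) 0 with h | h
    · rw [max_eq_left (by linarith : (0:ℝ) ≤ -(B ω)), max_eq_right h]; ring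
    · rw [max_eq_right (by linarith : -(B ω) ≤ (0:ℝ)), max_eq_left h]; ring
  have hQ : Qs (fun ω => -(B ω)) =
      Qs (fun ω => max (-(B ω)) 0) - Qs (fun ω => max (B ω) 0) := by
    rw [hdecomp, hadd _ _ hBneg hnegBp_mem]
    rw [show (fun ω => -(max (B ω) 0)) = (-1 : ℝ) • (fun ω => max (B ω) 0) from
      funext fun ω => by simp]
    rw [hsmul (-1) _ hBp_mem]
    ring
  refine ⟨⟨?_, ?_⟩, fun hM => hsing B hM⟩
  · rw [hQ]
    have h1 : Qs (fun ω => max (B ω) 0) ≤ N / L := (le_div_iff₀ hLpos).mpr hLb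
    linarith
  · rw [hQ]
    have h2 : Qs (fun ω => max (-(B ω)) 0) ≤ N / l := (le_div_iff₀ hlpos).mpr hlb
    linarith
end
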